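/- arXiv:1903.09954 — 3 statements merged into one kernel-verified Lean document; each statement's English description precedes it below -/
import Mathlib

section
/- Let Λ ⊂ ℝ^{nT} be a full-rank lattice whose dual Λ* admits algebraic reduction with constant α, meaning: for every unit-determinant n×n matrix E·U decomposition as in the hypothesis, with UΛ* = Λ* and ‖E^{-1}‖_F ≤ α. Let A be an n×n positive definite matrix with √A/(det A)^{1/(2n)} = E·U such a decomposition. Then Σ_{λ ∈ Λ* \ {0}} exp(−π²·λᵀ(I_T ⊗ A)λ) ≤ Σ_{λ ∈ Λ* \ {0}} exp(−π²·(det A)^{1/n}·‖λ‖²/α²). -/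
/-!
Put `c = (det A)^(1/(2n))`, `y = (I ⊗ U) λ` and `w = (I ⊗ E) y`. Since `(I ⊗ S) λ = c • w`, the
quadratic form `λᵀ (I ⊗ A) λ` equals `c² ‖w‖²`; since `y = (I ⊗ E⁻¹) w`, Cauchy–Schwarz row by row
gives `‖y‖² ≤ ‖E⁻¹‖_F² ‖w‖² ≤ α² ‖w‖²`. So the term of `λ` on the left is dominated by the term of
`y` on the right, and `λ ↦ (I ⊗ U) λ` permutes `Λ* \ {0}`.
-/

open Matrix Real Kronecker

namespace Matrix

variable {ι κ : Type*} [Fintype ι] [Fintype κ] [DecidableEq ι]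

theorem one_kronecker_mulVec_apply {R : Type*} [Semiring R] (M : Matrix κ κ R) (w : ι × κ → R)
    (t : ι) (i : κ) : (((1 : Matrix ι ι R) ⊗ₖ M) *ᵥ w) (t, i) = (M *ᵥ fun j => w (t, j)) i := by
  rw [mulVec, dotProduct, Fintype.sum_prod_type, Finset.sum_eq_single t]
  · simp [kroneckerMap_apply, mulVec, dotProduct]
  · intro s _ hs
    simp [kroneckerMap_apply, Ne.symm hs]
  · simp

theorem mulVec_dotProduct_self_le {m : Type*} [Fintype m] (M : Matrix m κ ℝ) (v : κ → ℝ) :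
    M *ᵥ v ⬝ᵥ M *ᵥ v ≤ (∑ i, ∑ j, M i j ^ 2) * (v ⬝ᵥ v) := by
  simp only [mulVec, dotProduct, ← sq]
  rw [Finset.sum_mul]
  exact Finset.sum_le_sum fun i _ => Finset.sum_mul_sq_le_sq_mul_sq _ _ _

theorem one_kronecker_mulVec_dotProduct_self_le (M : Matrix κ κ ℝ) (w : ι × κ → ℝ) :
    ((1 : Matrix ι ι ℝ) ⊗ₖ M) *ᵥ w ⬝ᵥ ((1 : Matrix ι ι ℝ) ⊗ₖ M) *ᵥ w
      ≤ (∑ i, ∑ j, M i j ^ 2) * (w ⬝ᵥ w) := by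
  simp only [dotProduct, Fintype.sum_prod_type, one_kronecker_mulVec_apply, Finset.mul_sum]
  refine Finset.sum_le_sum fun t _ => ?_
  simpa only [dotProduct, Finset.mul_sum] using mulVec_dotProduct_self_le M fun j => w (t, j)

theorem dotProduct_self_le_of_isUnit_det [DecidableEq κ] {E : Matrix κ κ ℝ} (hE : IsUnit E.det)
    (w : ι × κ → ℝ) :
    w ⬝ᵥ w ≤ (∑ i, ∑ j, E⁻¹ i j ^ 2) *
      (((1 : Matrix ι ι ℝ) ⊗ₖ E) *ᵥ w ⬝ᵥ ((1 : Matrix ι ι ℝ) ⊗ₖ E) *ᵥ w) := by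
  have hw : w = ((1 : Matrix ι ι ℝ) ⊗ₖ E⁻¹) *ᵥ (((1 : Matrix ι ι ℝ) ⊗ₖ E) *ᵥ w) := by
    rw [mulVec_mulVec, ← mul_kronecker_mul, one_mul, nonsing_inv_mul _ hE, one_kronecker_one,
      one_mulVec]
  conv_lhs => rw [hw]
  exact one_kronecker_mulVec_dotProduct_self_le _ _

theorem dotProduct_mulVec_eq_of_transpose_mul_self {R : Type*} [CommSemiring R]
    {S A : Matrix κ κ R} (hS : Sᵀ * S = A) (x : κ → R) : x ⬝ᵥ A *ᵥ x = S *ᵥ x ⬝ᵥ S *ᵥ x := by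
  rw [← hS, ← mulVec_mulVec, dotProduct_mulVec, vecMul_transpose]

theorem one_kronecker_transpose_mul_self {R : Type*} [CommSemiring R] (S : Matrix κ κ R) :
    ((1 : Matrix ι ι R) ⊗ₖ S)ᵀ * ((1 : Matrix ι ι R) ⊗ₖ S) = (1 : Matrix ι ι R) ⊗ₖ (Sᵀ * S) := by
  rw [← kroneckerMap_transpose, transpose_one, ← mul_kronecker_mul, one_mul]

theorem le_one_kronecker_quadForm_of_factorization [DecidableEq κ] {A S E U : Matrix κ κ ℝ}
    {c α : ℝ}
    (hS : Sᵀ * S = A) (hSEU : S = c • (E * U)) (hE : IsUnit E.det)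
    (hEF : √(∑ i, ∑ j, E⁻¹ i j ^ 2) ≤ α) (x : ι × κ → ℝ) :
    c ^ 2 * (((1 : Matrix ι ι ℝ) ⊗ₖ U) *ᵥ x ⬝ᵥ ((1 : Matrix ι ι ℝ) ⊗ₖ U) *ᵥ x) / α ^ 2
      ≤ x ⬝ᵥ ((1 : Matrix ι ι ℝ) ⊗ₖ A) *ᵥ x := by
  set y := ((1 : Matrix ι ι ℝ) ⊗ₖ U) *ᵥ x with hy
  set w := ((1 : Matrix ι ι ℝ) ⊗ₖ E) *ᵥ y with hw
  have hSx : ((1 : Matrix ι ι ℝ) ⊗ₖ S) *ᵥ x = c • w := by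
    rw [hSEU, kronecker_smul, smul_mulVec, hw, hy, mulVec_mulVec, ← mul_kronecker_mul, one_mul]
  have hquad : x ⬝ᵥ ((1 : Matrix ι ι ℝ) ⊗ₖ A) *ᵥ x = c ^ 2 * (w ⬝ᵥ w) := by
    rw [dotProduct_mulVec_eq_of_transpose_mul_self
      (by rw [one_kronecker_transpose_mul_self, hS]), hSx, smul_dotProduct, dotProduct_smul,
      smul_eq_mul, smul_eq_mul, ← mul_assoc, sq]
  have hyw : y ⬝ᵥ y ≤ w ⬝ᵥ w * α ^ 2 := by
    have hfrob : ∑ i, ∑ j, E⁻¹ i j ^ 2 ≤ α ^ 2 := (sqrt_le_iff.1 hEF).2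
    calc y ⬝ᵥ y ≤ (∑ i, ∑ j, E⁻¹ i j ^ 2) * (w ⬝ᵥ w) := dotProduct_self_le_of_isUnit_det hE y
      _ ≤ w ⬝ᵥ w * α ^ 2 := by
        rw [mul_comm]
        gcongr
        exact dotProduct_self_star_nonneg w
  rw [hquad, mul_div_assoc]
  gcongr
  exact div_le_of_le_mul₀ (sq_nonneg α) (dotProduct_self_star_nonneg w) hyw

theorem tsum_nonzero_mem_mulVec_eq {K m β : Type*} [Field K] [Fintype m] [DecidableEq m]
    [AddCommMonoid β] [TopologicalSpace β] {S : Type*} [SetLike S (m → K)] {M : Matrix m m K}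
    (hM : IsUnit M) (L : S) (hL : ∀ x, x ∈ L ↔ M *ᵥ x ∈ L) (g : (m → K) → β) :
    ∑' x : {x // x ∈ L ∧ x ≠ 0}, g (M *ᵥ x) = ∑' x : {x // x ∈ L ∧ x ≠ 0}, g x := by
  have hinj := mulVec_injective_iff_isUnit.2 hM
  let e := Equiv.ofBijective _ ⟨hinj, mulVec_surjective_iff_isUnit.2 hM⟩
  exact (e.subtypeEquiv fun x => and_congr (hL x) (hinj.ne_iff' (mulVec_zero M)).symm).tsum_eq
    fun x : {x // x ∈ L ∧ x ≠ 0} => g x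

end Matrix

theorem Real.rpow_one_div_two_mul_sq {a : ℝ} (ha : 0 ≤ a) (r : ℝ) :
    (a ^ (1 / (2 * r))) ^ 2 = a ^ (1 / r) := by
  rw [← rpow_natCast, ← rpow_mul ha]
  congr 1
  by_cases hr : r = 0
  · simp [hr]
  · push_cast
    field_simp

theorem stmt5_general {n T : ℕ} (Lstar : AddSubgroup (Fin T × Fin n → ℝ))
    (A S E U : Matrix (Fin n) (Fin n) ℝ) (α : ℝ)
    (hA : A.PosDef) (hS : Sᵀ * S = A)
    (hdecomp : S = (A.det ^ (1 / (2 * (n : ℝ)))) • (E * U))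
    (hE : E.det = 1) (hU : U.det = 1)
    (hUL : ∀ x, x ∈ Lstar ↔
      (Matrix.kroneckerMap (· * ·) (1 : Matrix (Fin T) (Fin T) ℝ) U) *ᵥ x ∈ Lstar)
    (hEF : Real.sqrt (∑ i, ∑ j, (E⁻¹ i j) ^ 2) ≤ α) :
    (∑' x : {x : Fin T × Fin n → ℝ // x ∈ Lstar ∧ x ≠ 0},
      ENNReal.ofReal (Real.exp (-(π ^ 2) *
        ((x : Fin T × Fin n → ℝ) ⬝ᵥ
          (Matrix.kroneckerMap (· * ·) (1 : Matrix (Fin T) (Fin T) ℝ) A) *ᵥ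
            (x : Fin T × Fin n → ℝ)))))
    ≤ ∑' x : {x : Fin T × Fin n → ℝ // x ∈ Lstar ∧ x ≠ 0},
      ENNReal.ofReal (Real.exp (-(π ^ 2) * (A.det ^ (1 / (n : ℝ))) *
        ((x : Fin T × Fin n → ℝ) ⬝ᵥ (x : Fin T × Fin n → ℝ)) / α ^ 2)) := by
  have hKU : IsUnit ((1 : Matrix (Fin T) (Fin T) ℝ) ⊗ₖ U) := by
    simp [isUnit_iff_isUnit_det, det_kronecker, hU]
  refine (ENNReal.tsum_le_tsum fun x => ENNReal.ofReal_le_ofReal (exp_le_exp.2 ?_)).trans_eq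
    (tsum_nonzero_mem_mulVec_eq hKU Lstar hUL
      fun y => ENNReal.ofReal (exp (-(π ^ 2) * A.det ^ (1 / (n : ℝ)) * (y ⬝ᵥ y) / α ^ 2)))
  have hx := le_one_kronecker_quadForm_of_factorization (ι := Fin T) hS hdecomp (by simp [hE])
    hEF x
  rw [rpow_one_div_two_mul_sq hA.det_pos.le] at hx
  rw [mul_assoc, mul_div_assoc]
  exact mul_le_mul_of_nonpos_left hx (by simp [sq_nonneg])

theorem stmt5 {n T : ℕ} (hn : 0 < n) (Lstar : AddSubgroup (Fin T × Fin n → ℝ))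
    (A S E U : Matrix (Fin n) (Fin n) ℝ) (α : ℝ) (hα : 0 < α)
    (hA : A.PosDef) (hS : Sᵀ * S = A)
    (hdecomp : S = (A.det ^ (1 / (2 * (n : ℝ)))) • (E * U))
    (hE : E.det = 1) (hU : U.det = 1)
    (hUL : ∀ x, x ∈ Lstar ↔
      (Matrix.kroneckerMap (· * ·) (1 : Matrix (Fin T) (Fin T) ℝ) U) *ᵥ x ∈ Lstar)
    (hEF : Real.sqrt (∑ i, ∑ j, (E⁻¹ i j) ^ 2) ≤ α) :
    (∑' x : {x : Fin T × Fin n → ℝ // x ∈ Lstar ∧ x ≠ 0},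
      ENNReal.ofReal (Real.exp (-(π ^ 2) *
        ((x : Fin T × Fin n → ℝ) ⬝ᵥ
          (Matrix.kroneckerMap (· * ·) (1 : Matrix (Fin T) (Fin T) ℝ) A) *ᵥ
            (x : Fin T × Fin n → ℝ)))))
    ≤ ∑' x : {x : Fin T × Fin n → ℝ // x ∈ Lstar ∧ x ≠ 0},
      ENNReal.ofReal (Real.exp (-(π ^ 2) * (A.det ^ (1 / (n : ℝ))) *
        ((x : Fin T × Fin n → ℝ) ⬝ᵥ (x : Fin T × Fin n → ℝ)) / α ^ 2)) :=
  stmt5_general Lstar A S E U α hA hS hdecomp hE hU hUL hEF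
end

section
/- Let Λ ⊂ ℝⁿ be a full-rank lattice with volume V(Λ), and σ > 0. Then the flatness factor satisfies ε_Λ(σ) = (γ_Λ(σ)/(2π))^{n/2} · Θ_Λ(1/(2πσ²)) − 1, where γ_Λ(σ) = V(Λ)^{2/n}/σ² is the volume-to-noise ratio and Θ_Λ(τ) = Σ_{λ∈Λ} exp(−πτ‖λ‖²) is the theta series, and the flatness factor is defined as ε_Λ(σ) = max_{x ∈ ℝⁿ} |V(Λ)·f_{σ,Λ}(x) − 1| with f_{σ,Λ}(x) = Σ_{λ∈Λ} (2πσ²)^{−n/2} exp(−‖x−λ‖²/(2σ²)). -/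
/-!
Put `x = B u` and `c = 1/(2σ²)`. Then `V(Λ) f_{σ,Λ}(x) = P_c(u)`, where
`P_t(u) = ∑_{k ∈ ℤⁿ} ρ_t(u - k)` periodizes the Gaussian probability density
`ρ_t(v) = |det B| (t/π)^{n/2} exp(-t‖Bv‖²)`, and the right-hand side is `P_c(0) - 1`.
By the parallelogram law `ρ_c` is the convolution square of `ρ_{2c}`, so
`P_c(u) = ∫_{[0,1)ⁿ} Q(u - y) Q(y) dy` for the even, ℤⁿ-periodic `Q = P_{2c}`, whose integral
over the cube is `1`. Cauchy–Schwarz gives `P_c(u) ≤ ∫ Q² = P_c(0)` and, applied to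
`Q(u - ·) + Q` against `1`, also `2 ≤ P_c(u) + P_c(0)`. Hence `|P_c(u) - 1| ≤ P_c(0) - 1`,
with equality at `u = 0`.
-/

open Matrix Real MeasureTheory
open scoped ENNReal

namespace FlatnessFactor

lemma sq_lintegral_mul_le {α : Type*} [MeasurableSpace α] {μ : Measure α} {f g : α → ℝ≥0∞}
    (hf : AEMeasurable f μ) (hg : AEMeasurable g μ) :
    (∫⁻ a, f a * g a ∂μ) ^ 2 ≤ (∫⁻ a, f a ^ 2 ∂μ) * ∫⁻ a, g a ^ 2 ∂μ := by
  have h := ENNReal.lintegral_mul_le_Lp_mul_Lq μ Real.HolderConjugate.two_two hf hg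
  simp only [Pi.mul_apply, ENNReal.rpow_two] at h
  calc (∫⁻ a, f a * g a ∂μ) ^ 2
      ≤ ((∫⁻ a, f a ^ 2 ∂μ) ^ (1 / 2 : ℝ) * (∫⁻ a, g a ^ 2 ∂μ) ^ (1 / 2 : ℝ)) ^ 2 := by gcongr
    _ = (∫⁻ a, f a ^ 2 ∂μ) * ∫⁻ a, g a ^ 2 ∂μ := by
        rw [mul_pow, ← ENNReal.rpow_natCast, ← ENNReal.rpow_natCast, ← ENNReal.rpow_mul,
          ← ENNReal.rpow_mul]
        norm_num

section UnitCube

def intVec {ι : Type*} : (ι → ℤ) →+ (ι → ℝ) := (Int.castAddHom ℝ).compLeft ι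

lemma coe_intVec {ι : Type*} (k : ι → ℤ) : intVec k = fun i => (k i : ℝ) := rfl

variable {ι : Type*} [Fintype ι]

abbrev intLattice (ι : Type*) [Fintype ι] : AddSubgroup (ι → ℝ) :=
  (Submodule.span ℤ (Set.range (Pi.basisFun ℝ ι))).toAddSubgroup

abbrev unitCube (ι : Type*) [Fintype ι] : Set (ι → ℝ) :=
  ZSpan.fundamentalDomain (Pi.basisFun ℝ ι)

noncomputable def intLatticeEquiv : (ι → ℤ) ≃ intLattice ι :=
  ((Pi.basisFun ℝ ι).restrictScalars ℤ).equivFun.symm.toEquiv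

lemma coe_intLatticeEquiv (k : ι → ℤ) : (intLatticeEquiv k : ι → ℝ) = intVec k := by
  classical
  ext j
  simp [intLatticeEquiv, coe_intVec, Module.Basis.equivFun_symm_apply, Finset.sum_apply,
    Pi.basisFun_apply, Pi.single_apply]

instance : Countable (intLattice ι) := Countable.of_equiv _ intLatticeEquiv

lemma isAddFundamentalDomain_unitCube :
    IsAddFundamentalDomain (intLattice ι) (unitCube ι) volume :=
  ZSpan.isAddFundamentalDomain' _ volume

lemma volume_unitCube : volume (unitCube ι) = 1 := by
  simp [ZSpan.fundamentalDomain_pi_basisFun, volume_pi_pi]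

lemma lintegral_eq_tsum_setLIntegral_unitCube (f : (ι → ℝ) → ℝ≥0∞) :
    ∫⁻ x, f x = ∑' k : ι → ℤ, ∫⁻ y in unitCube ι, f (intVec k + y) := by
  rw [isAddFundamentalDomain_unitCube.lintegral_eq_tsum'' f,
    ← intLatticeEquiv.tsum_eq]
  simp only [coe_intLatticeEquiv, AddSubgroup.vadd_def, vadd_eq_add]

variable {F : (ι → ℝ) → ℝ≥0∞}

lemma setLIntegral_unitCube_comp_sub (hF : ∀ y (k : ι → ℤ), F (y + intVec k) = F y)
    (u : ι → ℝ) : ∫⁻ y in unitCube ι, F (u - y) = ∫⁻ y in unitCube ι, F y := by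
  have hmp := Measure.measurePreserving_sub_left (volume : Measure (ι → ℝ)) u
  have hemb : MeasurableEmbedding (u - ·) := (MeasurableEquiv.subLeft u).measurableEmbedding
  have hreflect : IsAddFundamentalDomain (intLattice ι) ((u - ·) ⁻¹' unitCube ι) volume :=
    isAddFundamentalDomain_unitCube.preimage_of_equiv hmp.quasiMeasurePreserving
      (e := Neg.neg) neg_involutive.bijective fun g x => by
        simp only [AddSubgroup.vadd_def, vadd_eq_add, AddSubgroup.coe_neg]; abel
  have hinv : ∀ (g : intLattice ι) x, F (g +ᵥ x) = F x := by
    intro g x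
    obtain ⟨k, rfl⟩ := intLatticeEquiv.surjective g
    rw [AddSubgroup.vadd_def, vadd_eq_add, coe_intLatticeEquiv, add_comm, hF]
  calc ∫⁻ y in unitCube ι, F (u - y)
      = ∫⁻ y in (u - ·) ⁻¹' ((u - ·) ⁻¹' unitCube ι), F (u - y) := by
        rw [Function.Involutive.preimage (sub_sub_cancel u)]
    _ = ∫⁻ y in (u - ·) ⁻¹' unitCube ι, F y := hmp.setLIntegral_comp_preimage_emb hemb _ _
    _ = ∫⁻ y in unitCube ι, F y :=
        hreflect.setLIntegral_eq isAddFundamentalDomain_unitCube F hinv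

end UnitCube

section Autocorrelation

variable {ι : Type*} [Fintype ι] {F : (ι → ℝ) → ℝ≥0∞}

lemma setLIntegral_unitCube_mul_comp_sub_le (hFm : Measurable F)
    (hF : ∀ y (k : ι → ℤ), F (y + intVec k) = F y) (u : ι → ℝ) :
    ∫⁻ y in unitCube ι, F (u - y) * F y ≤ ∫⁻ y in unitCube ι, F y ^ 2 := by
  have hsq : ∫⁻ y in unitCube ι, F (u - y) ^ 2 = ∫⁻ y in unitCube ι, F y ^ 2 :=
    setLIntegral_unitCube_comp_sub (F := (F · ^ 2)) (fun y k => by simp only [hF]) u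
  have h := sq_lintegral_mul_le (μ := volume.restrict (unitCube ι)) (f := fun y => F (u - y))
    (hFm.comp (measurable_const_sub u)).aemeasurable hFm.aemeasurable
  rw [hsq, ← sq] at h
  exact (ENNReal.pow_le_pow_left_iff two_ne_zero).mp h

lemma two_mul_sq_setLIntegral_unitCube_le (hFm : Measurable F)
    (hF : ∀ y (k : ι → ℤ), F (y + intVec k) = F y) (u : ι → ℝ) :
    2 * (∫⁻ y in unitCube ι, F y) ^ 2
      ≤ (∫⁻ y in unitCube ι, F (u - y) * F y) + ∫⁻ y in unitCube ι, F y ^ 2 := by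
  have hFu : Measurable fun y => F (u - y) := hFm.comp (measurable_const_sub u)
  have hsum : ∫⁻ y in unitCube ι, (F (u - y) + F y) = 2 * ∫⁻ y in unitCube ι, F y := by
    rw [lintegral_add_left hFu, setLIntegral_unitCube_comp_sub hF, two_mul]
  have hsq : ∫⁻ y in unitCube ι, (F (u - y) + F y) ^ 2
      = 2 * ((∫⁻ y in unitCube ι, F (u - y) * F y) + ∫⁻ y in unitCube ι, F y ^ 2) := by
    simp only [add_sq, mul_assoc]
    rw [lintegral_add_right _ (hFm.pow_const 2), lintegral_add_left (hFu.pow_const 2),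
      lintegral_const_mul (f := fun y => F (u - y) * F y) _ (hFu.mul hFm),
      setLIntegral_unitCube_comp_sub (F := (F · ^ 2)) (fun y k => by simp only [hF]) u]
    ring
  have h := sq_lintegral_mul_le (μ := volume.restrict (unitCube ι))
    (f := fun y => F (u - y) + F y) (hFu.add hFm).aemeasurable (aemeasurable_const (b := 1))
  simp only [mul_one, one_pow, setLIntegral_const, volume_unitCube, hsum, hsq] at h
  rw [mul_pow, show (2 : ℝ≥0∞) ^ 2 = 2 * 2 by norm_num, mul_assoc] at h
  exact (ENNReal.mul_le_mul_iff_right two_ne_zero ENNReal.ofNat_ne_top).mp h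

end Autocorrelation

section Gaussian

variable {ι : Type*} [Fintype ι]

lemma lintegral_comp_mulVec [DecidableEq ι] {f : (ι → ℝ) → ℝ≥0∞} (hf : Measurable f)
    {M : Matrix ι ι ℝ} (hM : M.det ≠ 0) :
    ∫⁻ v, f (M *ᵥ v) = ENNReal.ofReal |M.det⁻¹| * ∫⁻ v, f v := by
  have hmeas : Measurable (Matrix.toLin' M) :=
    (LinearMap.continuous_of_finiteDimensional (Matrix.toLin' M)).measurable
  rw [← smul_eq_mul, ← lintegral_smul_measure, ← Real.map_matrix_volume_pi_eq_smul_volume_pi hM,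
    lintegral_map hf hmeas]
  simp only [Matrix.toLin'_apply]

lemma exp_neg_mul_dotProduct_self (t : ℝ) (w : ι → ℝ) :
    exp (-t * (w ⬝ᵥ w)) = ∏ i, exp (-t * w i ^ 2) := by
  simp only [dotProduct, Finset.mul_sum, ← Real.exp_sum, sq]

lemma integral_exp_neg_mul_dotProduct_self {t : ℝ} (ht : 0 < t) :
    ∫ w : ι → ℝ, exp (-t * (w ⬝ᵥ w)) = (π / t) ^ (Fintype.card ι / 2 : ℝ) := by
  simp only [exp_neg_mul_dotProduct_self]
  rw [volume_pi, integral_fintype_prod_eq_pow (fun x : ℝ => exp (-t * x ^ 2)), integral_gaussian,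
    Real.sqrt_eq_rpow, ← Real.rpow_natCast, ← Real.rpow_mul (by positivity)]
  ring_nf

lemma integrable_exp_neg_mul_dotProduct_self {t : ℝ} (ht : 0 < t) :
    Integrable fun w : ι → ℝ => exp (-t * (w ⬝ᵥ w)) := by
  simp only [exp_neg_mul_dotProduct_self]
  exact Integrable.fintype_prod (f := fun _ x => exp (-t * x ^ 2)) fun _ =>
    integrable_exp_neg_mul_sq ht

variable (B : Matrix ι ι ℝ)

def quadForm (v : ι → ℝ) : ℝ := (B *ᵥ v) ⬝ᵥ (B *ᵥ v)

lemma quadForm_nonneg (v : ι → ℝ) : 0 ≤ quadForm B v :=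
  Finset.sum_nonneg fun _ _ => mul_self_nonneg _

lemma quadForm_neg (v : ι → ℝ) : quadForm B (-v) = quadForm B v := by
  simp [quadForm, Matrix.mulVec_neg]

lemma quadForm_smul (a : ℝ) (v : ι → ℝ) : quadForm B (a • v) = a ^ 2 * quadForm B v := by
  simp only [quadForm, Matrix.mulVec_smul, dotProduct_smul, smul_dotProduct, smul_eq_mul]
  ring

lemma quadForm_add_add_quadForm_sub (v w : ι → ℝ) :
    quadForm B (v + w) + quadForm B (v - w) = 2 * quadForm B v + 2 * quadForm B w := by
  simp only [quadForm, Matrix.mulVec_add, Matrix.mulVec_sub, add_dotProduct, sub_dotProduct,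
    dotProduct_add, dotProduct_sub, dotProduct_comm (B *ᵥ w) (B *ᵥ v)]
  ring

lemma continuous_quadForm : Continuous (quadForm B) := by
  unfold quadForm Matrix.mulVec dotProduct
  fun_prop

section Density

variable [DecidableEq ι]

noncomputable def gaussDensity (t : ℝ) (v : ι → ℝ) : ℝ :=
  |B.det| * (t / π) ^ (Fintype.card ι / 2 : ℝ) * exp (-t * quadForm B v)

variable {B}

lemma quadForm_inv_mulVec_sub (hB : IsUnit B.det) (x v : ι → ℝ) :
    quadForm B (B⁻¹ *ᵥ x - v) = (x - B *ᵥ v) ⬝ᵥ (x - B *ᵥ v) := by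
  rw [quadForm, Matrix.mulVec_sub, Matrix.mulVec_mulVec, Matrix.mul_nonsing_inv B hB,
    Matrix.one_mulVec]

lemma gaussDensity_nonneg {t : ℝ} (ht : 0 ≤ t) (v : ι → ℝ) : 0 ≤ gaussDensity B t v := by
  unfold gaussDensity; positivity

lemma gaussDensity_pos (hB : B.det ≠ 0) {t : ℝ} (ht : 0 < t) (v : ι → ℝ) :
    0 < gaussDensity B t v := by
  have := abs_pos.mpr hB
  unfold gaussDensity; positivity

lemma gaussDensity_le {t : ℝ} (ht : 0 ≤ t) (v : ι → ℝ) :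
    gaussDensity B t v ≤ |B.det| * (t / π) ^ (Fintype.card ι / 2 : ℝ) := by
  unfold gaussDensity
  refine mul_le_of_le_one_right (by positivity) (exp_le_one_iff.mpr ?_)
  nlinarith [quadForm_nonneg B v]

lemma gaussDensity_neg (t : ℝ) (v : ι → ℝ) : gaussDensity B t (-v) = gaussDensity B t v := by
  rw [gaussDensity, quadForm_neg, gaussDensity]

lemma measurable_gaussDensity (t : ℝ) : Measurable (gaussDensity B t) := by
  unfold gaussDensity
  exact (continuous_const.mul ((continuous_quadForm B).const_mul _).rexp).measurable

lemma lintegral_exp_neg_mul_quadForm (hB : B.det ≠ 0) {t : ℝ} (ht : 0 < t) :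
    ∫⁻ v, ENNReal.ofReal (exp (-t * quadForm B v))
      = ENNReal.ofReal (|B.det⁻¹| * (π / t) ^ (Fintype.card ι / 2 : ℝ)) := by
  have hmeas : Measurable fun w : ι → ℝ => ENNReal.ofReal (exp (-t * (w ⬝ᵥ w))) := by fun_prop
  simp only [quadForm]
  rw [lintegral_comp_mulVec hmeas hB, ENNReal.ofReal_mul (abs_nonneg _),
    ← integral_exp_neg_mul_dotProduct_self ht,
    ofReal_integral_eq_lintegral_ofReal (integrable_exp_neg_mul_dotProduct_self ht)
      (Filter.Eventually.of_forall fun _ => (exp_pos _).le)]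

lemma lintegral_gaussDensity (hB : B.det ≠ 0) {t : ℝ} (ht : 0 < t) :
    ∫⁻ v, ENNReal.ofReal (gaussDensity B t v) = 1 := by
  have hN : 0 ≤ |B.det| * (t / π) ^ (Fintype.card ι / 2 : ℝ) := by positivity
  simp only [gaussDensity, ENNReal.ofReal_mul hN]
  rw [lintegral_const_mul' _ _ ENNReal.ofReal_ne_top, lintegral_exp_neg_mul_quadForm hB ht,
    ← ENNReal.ofReal_mul hN, ← ENNReal.ofReal_one]
  congr 1
  calc |B.det| * (t / π) ^ (Fintype.card ι / 2 : ℝ)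
        * (|B.det⁻¹| * (π / t) ^ (Fintype.card ι / 2 : ℝ))
      = (|B.det| * |B.det|⁻¹) * (t / π * (π / t)) ^ (Fintype.card ι / 2 : ℝ) := by
        rw [abs_inv, mul_rpow (by positivity) (by positivity)]; ring
    _ = 1 := by
        rw [mul_inv_cancel₀ (abs_ne_zero.mpr hB), div_mul_div_cancel₀ pi_ne_zero,
          div_self ht.ne', one_rpow, one_mul]

lemma gaussDensity_mul_gaussDensity {t : ℝ} (ht : 0 ≤ t) (v w : ι → ℝ) :
    gaussDensity B (2 * t) v * gaussDensity B (2 * t) w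
      = gaussDensity B t (v + w) * gaussDensity B (4 * t) ((2 : ℝ)⁻¹ • (v - w)) := by
  have hpow : (2 * t / π) ^ (Fintype.card ι / 2 : ℝ) * (2 * t / π) ^ (Fintype.card ι / 2 : ℝ)
      = (t / π) ^ (Fintype.card ι / 2 : ℝ) * (4 * t / π) ^ (Fintype.card ι / 2 : ℝ) := by
    rw [← mul_rpow (by positivity) (by positivity), ← mul_rpow (by positivity) (by positivity)]
    ring_nf
  have hexp : exp (-(2 * t) * quadForm B v) * exp (-(2 * t) * quadForm B w)
      = exp (-t * quadForm B (v + w)) * exp (-(4 * t) * quadForm B ((2 : ℝ)⁻¹ • (v - w))) := by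
    rw [← exp_add, ← exp_add, quadForm_smul]
    congr 1
    linear_combination t * quadForm_add_add_quadForm_sub B v w
  simp only [gaussDensity]
  calc _ = |B.det| ^ 2
        * ((2 * t / π) ^ (Fintype.card ι / 2 : ℝ) * (2 * t / π) ^ (Fintype.card ι / 2 : ℝ))
        * (exp (-(2 * t) * quadForm B v) * exp (-(2 * t) * quadForm B w)) := by ring
    _ = _ := by rw [hpow, hexp]; ring

lemma gaussDensity_one_div_two_mul_sq (σ : ℝ) (v : ι → ℝ) :
    gaussDensity B (1 / (2 * σ ^ 2)) v = |B.det| * (2 * π * σ ^ 2) ^ (-(Fintype.card ι : ℝ) / 2)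
      * exp (-quadForm B v / (2 * σ ^ 2)) := by
  rw [gaussDensity, neg_div, rpow_neg (by positivity), ← inv_rpow (by positivity)]
  congr 1
  · congr 2; ring
  · congr 1; ring

lemma lintegral_gaussDensity_mul_gaussDensity (hB : B.det ≠ 0) {t : ℝ} (ht : 0 < t)
    (u w : ι → ℝ) :
    ∫⁻ y, ENNReal.ofReal (gaussDensity B (2 * t) (u - y))
        * ENNReal.ofReal (gaussDensity B (2 * t) (y - w))
      = ENNReal.ofReal (gaussDensity B t (u - w)) := by
  have hsplit : ∀ y, ENNReal.ofReal (gaussDensity B (2 * t) (u - y))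
        * ENNReal.ofReal (gaussDensity B (2 * t) (y - w))
      = ENNReal.ofReal (gaussDensity B t (u - w))
        * ENNReal.ofReal (gaussDensity B (4 * t) ((2 : ℝ)⁻¹ • (u + w) - y)) := by
    intro y
    rw [← ENNReal.ofReal_mul (gaussDensity_nonneg (by positivity) _),
      gaussDensity_mul_gaussDensity ht.le, sub_add_sub_cancel,
      ENNReal.ofReal_mul (gaussDensity_nonneg ht.le _)]
    congr 3
    module
  simp only [hsplit]
  rw [lintegral_const_mul' _ _ ENNReal.ofReal_ne_top,
    lintegral_sub_left_eq_self (fun y => ENNReal.ofReal (gaussDensity B (4 * t) y)),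
    lintegral_gaussDensity hB (by positivity), mul_one]

end Density

end Gaussian

section Periodization

variable {ι : Type*} [Fintype ι] [DecidableEq ι]

noncomputable def periodizedGauss (B : Matrix ι ι ℝ) (t : ℝ) (u : ι → ℝ) : ℝ≥0∞ :=
  ∑' k : ι → ℤ, ENNReal.ofReal (gaussDensity B t (u - intVec k))

variable {B : Matrix ι ι ℝ}

lemma measurable_gaussDensity_sub (t : ℝ) (v : ι → ℝ) :
    Measurable fun y => ENNReal.ofReal (gaussDensity B t (y - v)) :=
  ((measurable_gaussDensity t).comp (measurable_sub_const v)).ennreal_ofReal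

lemma measurable_periodizedGauss (t : ℝ) : Measurable (periodizedGauss B t) :=
  .tsum fun _ => measurable_gaussDensity_sub t _

lemma periodizedGauss_add_intVec (t : ℝ) (u : ι → ℝ) (l : ι → ℤ) :
    periodizedGauss B t (u + intVec l) = periodizedGauss B t u := by
  rw [periodizedGauss, ← (Equiv.addRight l).tsum_eq]
  simp only [Equiv.coe_addRight, map_add, add_sub_add_right_eq_sub, periodizedGauss]

lemma periodizedGauss_neg (t : ℝ) (u : ι → ℝ) :
    periodizedGauss B t (-u) = periodizedGauss B t u := by
  rw [periodizedGauss, ← (Equiv.neg _).tsum_eq]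
  refine tsum_congr fun k => ?_
  rw [Equiv.neg_apply, map_neg, sub_neg_eq_add, ← gaussDensity_neg, neg_add', neg_neg]

lemma setLIntegral_unitCube_periodizedGauss (hB : B.det ≠ 0) {t : ℝ} (ht : 0 < t) :
    ∫⁻ y in unitCube ι, periodizedGauss B t y = 1 := by
  simp only [periodizedGauss]
  rw [lintegral_tsum fun _ => (measurable_gaussDensity_sub t _).aemeasurable,
    ← lintegral_gaussDensity hB ht, lintegral_eq_tsum_setLIntegral_unitCube,
    ← (Equiv.neg _).tsum_eq]
  simp only [Equiv.neg_apply, map_neg, sub_neg_eq_add, add_comm]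

lemma periodizedGauss_eq_setLIntegral (hB : B.det ≠ 0) {t : ℝ} (ht : 0 < t) (u : ι → ℝ) :
    periodizedGauss B t u
      = ∫⁻ y in unitCube ι, periodizedGauss B (2 * t) (u - y) * periodizedGauss B (2 * t) y := by
  set ρ := fun v => ENNReal.ofReal (gaussDensity B (2 * t) v)
  have hρ : Measurable ρ := (measurable_gaussDensity _).ennreal_ofReal
  calc periodizedGauss B t u
      = ∑' k : ι → ℤ, ∫⁻ y, ρ (u - y) * ρ (y - intVec k) := by
        simp only [periodizedGauss, ρ, lintegral_gaussDensity_mul_gaussDensity hB ht]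
    _ = ∫⁻ y, ρ (u - y) * periodizedGauss B (2 * t) y := by
        rw [← lintegral_tsum (f := fun k y => ρ (u - y) * ρ (y - intVec k)) fun k =>
          ((hρ.comp (measurable_const_sub u)).mul (hρ.comp (measurable_sub_const _))).aemeasurable]
        simp only [ENNReal.tsum_mul_left, periodizedGauss, ρ]
    _ = ∑' k : ι → ℤ, ∫⁻ y in unitCube ι, ρ (u - y - intVec k) * periodizedGauss B (2 * t) y := by
        rw [lintegral_eq_tsum_setLIntegral_unitCube]
        simp only [add_comm (intVec _), periodizedGauss_add_intVec, sub_add_eq_sub_sub]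
    _ = ∫⁻ y in unitCube ι, periodizedGauss B (2 * t) (u - y) * periodizedGauss B (2 * t) y := by
        rw [← lintegral_tsum (f := fun k y => ρ (u - y - intVec k) * periodizedGauss B (2 * t) y)
          fun k => ((hρ.comp ((measurable_const_sub u).sub_const _)).mul
            (measurable_periodizedGauss _)).aemeasurable]
        simp only [ENNReal.tsum_mul_right, periodizedGauss, ρ]

lemma exists_periodizedGauss_ne_top (hB : B.det ≠ 0) {t : ℝ} (ht : 0 < t) :
    ∃ y, periodizedGauss B t y ≠ ∞ := by
  have hcube : volume.restrict (unitCube ι) ≠ 0 := by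
    rw [Ne, Measure.restrict_eq_zero, volume_unitCube]
    exact one_ne_zero
  have := ae_neBot.mpr hcube
  obtain ⟨y, hy⟩ := (ae_lt_top (measurable_periodizedGauss t)
    (by rw [setLIntegral_unitCube_periodizedGauss hB ht]; exact ENNReal.one_ne_top)).exists
  exact ⟨y, hy.ne⟩

lemma periodizedGauss_zero_ne_top (hB : B.det ≠ 0) {t : ℝ} (ht : 0 < t) :
    periodizedGauss B t 0 ≠ ∞ := by
  obtain ⟨s, hs, rfl⟩ : ∃ s, 0 < s ∧ 2 * s = t := ⟨t / 2, half_pos ht, by ring⟩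
  obtain ⟨y, hy⟩ := exists_periodizedGauss_ne_top hB hs
  set N := |B.det| * (4 * s / π) ^ (Fintype.card ι / 2 : ℝ)
  -- `ρ_{2s}(y) ρ_{2s}(-k) = ρ_s(y - k) ρ_{4s}(⋯) ≤ N ρ_s(y - k)`, summed over `k`
  have hdom : ENNReal.ofReal (gaussDensity B (2 * s) y) * periodizedGauss B (2 * s) 0
      ≤ ENNReal.ofReal N * periodizedGauss B s y := by
    simp only [periodizedGauss, ← ENNReal.tsum_mul_left]
    refine ENNReal.tsum_le_tsum fun k => ?_
    rw [← ENNReal.ofReal_mul (gaussDensity_nonneg (by positivity) _),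
      ← ENNReal.ofReal_mul (by positivity), gaussDensity_mul_gaussDensity hs.le, zero_sub,
      ← sub_eq_add_neg, mul_comm N]
    exact ENNReal.ofReal_le_ofReal (mul_le_mul_of_nonneg_left (gaussDensity_le (by positivity) _)
      (gaussDensity_nonneg hs.le _))
  exact (ENNReal.lt_top_of_mul_ne_top_right
    (ne_top_of_le_ne_top (ENNReal.mul_ne_top ENNReal.ofReal_ne_top hy) hdom)
    (ENNReal.ofReal_pos.mpr (gaussDensity_pos hB (by positivity) y)).ne').ne

lemma periodizedGauss_le_periodizedGauss_zero (hB : B.det ≠ 0) {t : ℝ} (ht : 0 < t)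
    (u : ι → ℝ) : periodizedGauss B t u ≤ periodizedGauss B t 0 := by
  rw [periodizedGauss_eq_setLIntegral hB ht u, periodizedGauss_eq_setLIntegral hB ht 0]
  simp only [zero_sub, periodizedGauss_neg, ← sq]
  exact setLIntegral_unitCube_mul_comp_sub_le (measurable_periodizedGauss _)
    (periodizedGauss_add_intVec _) u

lemma two_le_periodizedGauss_add_periodizedGauss_zero (hB : B.det ≠ 0) {t : ℝ} (ht : 0 < t)
    (u : ι → ℝ) : 2 ≤ periodizedGauss B t u + periodizedGauss B t 0 := by
  have h := two_mul_sq_setLIntegral_unitCube_le (measurable_periodizedGauss (B := B) (2 * t))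
    (periodizedGauss_add_intVec _) u
  rw [setLIntegral_unitCube_periodizedGauss hB (by positivity), one_pow, mul_one] at h
  rw [periodizedGauss_eq_setLIntegral hB ht u, periodizedGauss_eq_setLIntegral hB ht 0]
  simpa only [zero_sub, periodizedGauss_neg, ← sq] using h

lemma periodizedGauss_ne_top (hB : B.det ≠ 0) {t : ℝ} (ht : 0 < t) (u : ι → ℝ) :
    periodizedGauss B t u ≠ ∞ :=
  ne_top_of_le_ne_top (periodizedGauss_zero_ne_top hB ht)
    (periodizedGauss_le_periodizedGauss_zero hB ht u)

lemma toReal_periodizedGauss {t : ℝ} (ht : 0 ≤ t) (u : ι → ℝ) :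
    (periodizedGauss B t u).toReal = ∑' k : ι → ℤ, gaussDensity B t (u - intVec k) := by
  rw [periodizedGauss, ENNReal.tsum_toReal_eq fun _ => ENNReal.ofReal_ne_top]
  simp only [ENNReal.toReal_ofReal (gaussDensity_nonneg ht _)]

lemma toReal_periodizedGauss_le (hB : B.det ≠ 0) {t : ℝ} (ht : 0 < t) (u : ι → ℝ) :
    (periodizedGauss B t u).toReal ≤ (periodizedGauss B t 0).toReal :=
  ENNReal.toReal_mono (periodizedGauss_zero_ne_top hB ht)
    (periodizedGauss_le_periodizedGauss_zero hB ht u)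

lemma two_le_toReal_periodizedGauss_add (hB : B.det ≠ 0) {t : ℝ} (ht : 0 < t) (u : ι → ℝ) :
    2 ≤ (periodizedGauss B t u).toReal + (periodizedGauss B t 0).toReal := by
  rw [← ENNReal.toReal_add (periodizedGauss_ne_top hB ht u) (periodizedGauss_ne_top hB ht 0)]
  exact ENNReal.toReal_mono
    (ENNReal.add_ne_top.mpr ⟨periodizedGauss_ne_top hB ht u, periodizedGauss_ne_top hB ht 0⟩)
    (two_le_periodizedGauss_add_periodizedGauss_zero hB ht u)

lemma toReal_periodizedGauss_inv_mulVec (hB : IsUnit B.det) (σ : ℝ) (x : ι → ℝ) :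
    (periodizedGauss B (1 / (2 * σ ^ 2)) (B⁻¹ *ᵥ x)).toReal
      = |B.det| * ∑' k : ι → ℤ, (2 * π * σ ^ 2) ^ (-(Fintype.card ι : ℝ) / 2) *
          exp (-((x - B *ᵥ intVec k) ⬝ᵥ (x - B *ᵥ intVec k)) / (2 * σ ^ 2)) := by
  rw [toReal_periodizedGauss (by positivity), ← tsum_mul_left]
  simp only [gaussDensity_one_div_two_mul_sq, quadForm_inv_mulVec_sub hB, mul_assoc]

lemma toReal_periodizedGauss_zero (σ : ℝ) :
    (periodizedGauss B (1 / (2 * σ ^ 2)) 0).toReal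
      = |B.det| * (2 * π * σ ^ 2) ^ (-(Fintype.card ι : ℝ) / 2) * ∑' k : ι → ℤ,
          exp (-π * (1 / (2 * π * σ ^ 2)) * ((B *ᵥ intVec k) ⬝ᵥ (B *ᵥ intVec k))) := by
  rw [toReal_periodizedGauss (by positivity), ← tsum_mul_left]
  refine tsum_congr fun k => ?_
  rw [gaussDensity_one_div_two_mul_sq, zero_sub, quadForm_neg, quadForm]
  congr 2
  field_simp

end Periodization

lemma rpow_two_div_div_sq_div_two_pi_rpow_half {n : ℕ} (hn : n ≠ 0) {V : ℝ} (hV : 0 ≤ V)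
    (σ : ℝ) : ((V ^ (2 / (n : ℝ)) / σ ^ 2) / (2 * π)) ^ ((n : ℝ) / 2)
      = V * (2 * π * σ ^ 2) ^ (-(n : ℝ) / 2) := by
  rw [show V ^ (2 / (n : ℝ)) / σ ^ 2 / (2 * π) = V ^ (2 / (n : ℝ)) * (2 * π * σ ^ 2)⁻¹ by ring,
    mul_rpow (by positivity) (by positivity), ← rpow_mul hV, inv_rpow (by positivity),
    ← rpow_neg (by positivity), neg_div, show 2 / (n : ℝ) * (n / 2) = 1 by field_simp, rpow_one]

lemma iSup_abs_sub_one_eq {X : Type*} {φ : X → ℝ} {M : ℝ} (x₀ : X) (hx₀ : φ x₀ = M)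
    (hle : ∀ x, φ x ≤ M) (hge : ∀ x, 2 ≤ φ x + M) : ⨆ x, |φ x - 1| = M - 1 := by
  have : Nonempty X := ⟨x₀⟩
  have hM : |φ x₀ - 1| = M - 1 := by rw [hx₀, abs_of_nonneg (by linarith [hge x₀])]
  refine ciSup_eq_of_forall_le_of_forall_lt_exists_gt (fun x => abs_le.mpr ?_)
    fun w hw => ⟨x₀, by rwa [hM]⟩
  exact ⟨by linarith [hge x], by linarith [hle x]⟩

end FlatnessFactor

open FlatnessFactor in
theorem stmt11 {n : ℕ} (hn : 0 < n) (B : Matrix (Fin n) (Fin n) ℝ) (hB : IsUnit B.det)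
    (σ : ℝ) (hσ : 0 < σ) :
    (⨆ x : Fin n → ℝ, |(|B.det|) * (∑' k : Fin n → ℤ,
        (2 * π * σ ^ 2) ^ (-(n : ℝ) / 2) *
          Real.exp (-((x - B *ᵥ fun i => (k i : ℝ)) ⬝ᵥ (x - B *ᵥ fun i => (k i : ℝ))) /
            (2 * σ ^ 2))) - 1|)
    = ((|B.det| ^ (2 / (n : ℝ)) / σ ^ 2) / (2 * π)) ^ ((n : ℝ) / 2) *
        (∑' k : Fin n → ℤ, Real.exp (-π * (1 / (2 * π * σ ^ 2)) *
          ((B *ᵥ fun i => (k i : ℝ)) ⬝ᵥ (B *ᵥ fun i => (k i : ℝ))))) - 1 := by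
  have hdet : B.det ≠ 0 := hB.ne_zero
  have hc : 0 < 1 / (2 * σ ^ 2) := by positivity
  have hf := toReal_periodizedGauss_inv_mulVec hB σ
  have hθ := toReal_periodizedGauss_zero (B := B) σ
  simp only [Fintype.card_fin, coe_intVec] at hf hθ
  rw [rpow_two_div_div_sq_div_two_pi_rpow_half hn.ne' (abs_nonneg _), ← hθ]
  simp only [← hf]
  exact iSup_abs_sub_one_eq 0 (by rw [mulVec_zero])
    (fun _ => toReal_periodizedGauss_le hdet hc _)
    (fun _ => two_le_toReal_periodizedGauss_add hdet hc _)
end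

section
/- Let M be a random variable (message) on a finite set, and let Y be a random variable such that for some density q, the variational distance satisfies V(p_{Y|M=m}, q) ≤ ε for all m, with 0 < ε ≤ 1/2, and |range(M)| = e^{TR}. Then the mutual information is bounded as I(M; Y) ≤ 2εTR − 2ε log(2ε). -/
/-!
Let `P_Y = ∑ₘ p_M(m) p_{Y|m}` be the output distribution. Every `p_{Y|m}` is `ε`-close to `q`
in `L¹`, hence so is the mixture `P_Y`, so `p_{Y|m}` is `2ε`-close to `P_Y` and, both having total
mass one, the positive part of `p_{Y|m} - P_Y` has mass at most `ε`.

Pointwise `p_M(m) p(y|m) ≤ P_Y(y)`, i.e. `p(y|m) / P_Y(y) ≤ 1 / p_M(m)`. This alone gives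
`I(M;Y) ≤ H(M)`; splitting `p log (p / P_Y)` along the excess `p - P_Y` and using `log x ≤ x - 1`
on the rest gives `I(M;Y) ≤ ε (H(M) + 1)`. With `H(M) ≤ log |M| = TR`, one of the two bounds is
below `2εTR - 2ε log (2ε)` according as `TR` is below or above `1 + 2 log (2ε)`.
-/

open Real Finset

lemma log_div_le_neg_log {w a b : ℝ} (hw : 0 < w) (ha : 0 < a) (hab : w * a ≤ b) :
    log (a / b) ≤ -log w := by
  have hb : 0 < b := (mul_pos hw ha).trans_le hab
  rw [← log_inv]
  exact log_le_log (div_pos ha hb) (by rw [div_le_iff₀ hb]; field_simp; linarith)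

lemma mul_mul_log_div_le_mul_negMulLog {w a b : ℝ} (hw : 0 ≤ w) (ha : 0 ≤ a)
    (hab : w * a ≤ b) : w * a * log (a / b) ≤ a * negMulLog w := by
  rcases hw.eq_or_lt with rfl | hw
  · simp
  rcases ha.eq_or_lt with rfl | ha
  · simp
  calc w * a * log (a / b) ≤ w * a * -log w := by gcongr; exact log_div_le_neg_log hw ha hab
    _ = a * negMulLog w := by rw [negMulLog]; ring

lemma mul_mul_log_div_le_max_sub {w a b : ℝ} (hw : 0 ≤ w) (ha : 0 ≤ a) (hab : w * a ≤ b) :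
    w * a * log (a / b) ≤ (negMulLog w + w) * max (a - b) 0 := by
  rcases hw.eq_or_lt with rfl | hw
  · simp
  rcases le_or_gt a b with hle | hgt
  · have hb : 0 ≤ b := (mul_nonneg hw.le ha).trans hab
    rw [max_eq_right (by linarith), mul_zero]
    exact mul_nonpos_of_nonneg_of_nonpos (by positivity)
      (log_nonpos (by positivity) (div_le_one_of_le₀ hle hb))
  · have ha : 0 < a := by linarith [mul_nonneg hw.le ha]
    have hb : 0 < b := (mul_pos hw ha).trans_le hab
    -- write `a = (a - b) + b`: the first part is bounded by the ratio bound, the second by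
    -- `log x ≤ x - 1`
    have hratio := mul_le_mul_of_nonneg_left (log_div_le_neg_log hw ha hab) (sub_nonneg.mpr hgt.le)
    have hsub : b * log (a / b) ≤ a - b := by
      have := mul_le_mul_of_nonneg_left (log_le_sub_one_of_pos (div_pos ha hb)) hb.le
      rwa [mul_sub, mul_div_cancel₀ _ hb.ne', mul_one] at this
    rw [max_eq_left (by linarith), negMulLog]
    nlinarith

lemma sum_max_sub_zero_eq_half_sum_abs {ι : Type*} (s : Finset ι) {f g : ι → ℝ}
    (hfg : ∑ i ∈ s, f i = ∑ i ∈ s, g i) :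
    ∑ i ∈ s, max (f i - g i) 0 = (∑ i ∈ s, |f i - g i|) / 2 := by
  have htwice : ∀ x : ℝ, 2 * max x 0 = x + |x| := fun x => by
    linarith [max_zero_add_max_neg_zero_eq_abs_self x, max_zero_sub_max_neg_zero_eq_self x]
  have : 2 * ∑ i ∈ s, max (f i - g i) 0 = ∑ i ∈ s, (f i - g i) + ∑ i ∈ s, |f i - g i| := by
    rw [mul_sum, ← sum_add_distrib]
    exact sum_congr rfl fun i _ => htwice _
  rw [sum_sub_distrib, hfg, sub_self, zero_add] at this
  linarith

lemma sum_negMulLog_le_log_card {M : Type*} [Fintype M] {w : M → ℝ} (hw : ∀ m, 0 ≤ w m)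
    (hw1 : ∑ m, w m = 1) : ∑ m, negMulLog (w m) ≤ log (Fintype.card M) := by
  have hK : (0 : ℝ) < Fintype.card M := by
    obtain ⟨m, -, -⟩ := exists_ne_zero_of_sum_ne_zero (hw1.trans_ne one_ne_zero)
    have : Nonempty M := ⟨m⟩
    exact_mod_cast Fintype.card_pos
  -- Jensen's inequality for the concave `negMulLog` with uniform weights
  have hJ := concaveOn_negMulLog.le_map_sum (t := univ) (w := fun _ => (Fintype.card M : ℝ)⁻¹)
    (p := w) (fun _ _ => by positivity) (by simp [hK.ne']) (fun m _ => Set.mem_Ici.mpr (hw m))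
  simp only [smul_eq_mul, ← mul_sum, hw1, mul_one] at hJ
  rw [negMulLog, log_inv] at hJ
  rwa [neg_mul_neg, inv_mul_le_iff₀ hK, ← mul_assoc, mul_inv_cancel₀ hK.ne', one_mul] at hJ

lemma le_two_mul_mul_sub_two_mul_mul_log {I L ε : ℝ} (hε : 0 < ε) (hε2 : ε ≤ 1 / 2)
    (hL : I ≤ L) (hεL : I ≤ ε * (L + 1)) : I ≤ 2 * ε * L - 2 * ε * log (2 * ε) := by
  have hlog : log (2 * ε) ≤ 2 * ε - 1 := log_le_sub_one_of_pos (by linarith)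
  rcases le_or_gt (1 + 2 * log (2 * ε)) L with h | h
  · nlinarith
  · -- `(1 - x) + (2 - x) log x ≤ -(1 - x)²` for `x = 2ε`, by `log x ≤ x - 1`
    have hx : 1 - 2 * ε + (2 - 2 * ε) * log (2 * ε) ≤ 0 := by nlinarith
    nlinarith

section Mixture

variable {M Y : Type*} [Fintype M]

def mixture (w : M → ℝ) (p : M → Y → ℝ) (y : Y) : ℝ := ∑ m, w m * p m y

noncomputable def mutualInfo [Fintype Y] (w : M → ℝ) (p : M → Y → ℝ) : ℝ :=
  ∑ m, ∑ y, w m * p m y * log (p m y / mixture w p y)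

variable {w : M → ℝ} {p : M → Y → ℝ}

lemma mul_le_mixture (hw : ∀ m, 0 ≤ w m) (hp : ∀ m y, 0 ≤ p m y) (m : M) (y : Y) :
    w m * p m y ≤ mixture w p y :=
  single_le_sum (f := fun m => w m * p m y) (fun m _ => mul_nonneg (hw m) (hp m y)) (mem_univ m)

lemma sum_mixture [Fintype Y] (hw1 : ∑ m, w m = 1) (hp1 : ∀ m, ∑ y, p m y = 1) :
    ∑ y, mixture w p y = 1 := by
  simp only [mixture]
  rw [sum_comm]
  simp only [← mul_sum, hp1, mul_one, hw1]

lemma sum_abs_mixture_sub_le [Fintype Y] {q : Y → ℝ} {ε : ℝ} (hw : ∀ m, 0 ≤ w m)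
    (hw1 : ∑ m, w m = 1) (hV : ∀ m, ∑ y, |p m y - q y| ≤ ε) :
    ∑ y, |mixture w p y - q y| ≤ ε := by
  have hsub : ∀ y, mixture w p y - q y = ∑ m, w m * (p m y - q y) := fun y => by
    simp only [mixture, mul_sub, sum_sub_distrib, ← sum_mul, hw1, one_mul]
  calc ∑ y, |mixture w p y - q y| ≤ ∑ y, ∑ m, w m * |p m y - q y| := by
        refine sum_le_sum fun y _ => ?_
        rw [hsub]
        refine (abs_sum_le_sum_abs _ _).trans_eq (sum_congr rfl fun m _ => ?_)
        rw [abs_mul, abs_of_nonneg (hw m)]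
    _ = ∑ m, w m * ∑ y, |p m y - q y| := by rw [sum_comm]; simp only [mul_sum]
    _ ≤ ∑ m, w m * ε := sum_le_sum fun m _ => mul_le_mul_of_nonneg_left (hV m) (hw m)
    _ = ε := by rw [← sum_mul, hw1, one_mul]

lemma sum_max_sub_mixture_le [Fintype Y] {q : Y → ℝ} {ε : ℝ} (hw : ∀ m, 0 ≤ w m)
    (hw1 : ∑ m, w m = 1) (hp1 : ∀ m, ∑ y, p m y = 1) (hV : ∀ m, ∑ y, |p m y - q y| ≤ ε)
    (m : M) : ∑ y, max (p m y - mixture w p y) 0 ≤ ε := by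
  rw [sum_max_sub_zero_eq_half_sum_abs _ ((hp1 m).trans (sum_mixture hw1 hp1).symm)]
  have htri : ∑ y, |p m y - mixture w p y| ≤ ε + ε :=
    calc ∑ y, |p m y - mixture w p y| ≤ ∑ y, (|p m y - q y| + |q y - mixture w p y|) :=
          sum_le_sum fun y _ => abs_sub_le _ _ _
      _ ≤ ε + ε := by
          simp only [sum_add_distrib, abs_sub_comm (q _)]
          exact add_le_add (hV m) (sum_abs_mixture_sub_le hw hw1 hV)
  linarith

lemma mutualInfo_le_sum_negMulLog [Fintype Y] (hw : ∀ m, 0 ≤ w m) (hp : ∀ m y, 0 ≤ p m y)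
    (hp1 : ∀ m, ∑ y, p m y = 1) : mutualInfo w p ≤ ∑ m, negMulLog (w m) :=
  calc mutualInfo w p ≤ ∑ m, ∑ y, p m y * negMulLog (w m) :=
        sum_le_sum fun m _ => sum_le_sum fun y _ =>
          mul_mul_log_div_le_mul_negMulLog (hw m) (hp m y) (mul_le_mixture hw hp m y)
    _ = ∑ m, negMulLog (w m) := by simp only [← sum_mul, hp1, one_mul]

lemma mutualInfo_le_mul_sum_negMulLog_add_one [Fintype Y] {q : Y → ℝ} {ε : ℝ}
    (hw : ∀ m, 0 ≤ w m) (hw1 : ∑ m, w m = 1) (hp : ∀ m y, 0 ≤ p m y)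
    (hp1 : ∀ m, ∑ y, p m y = 1) (hV : ∀ m, ∑ y, |p m y - q y| ≤ ε) :
    mutualInfo w p ≤ ε * (∑ m, negMulLog (w m) + 1) := by
  have hcoeff : ∀ m, 0 ≤ negMulLog (w m) + w m := fun m =>
    add_nonneg (negMulLog_nonneg (hw m) (hw1 ▸ single_le_sum (fun i _ => hw i) (mem_univ m)))
      (hw m)
  calc mutualInfo w p ≤ ∑ m, ∑ y, (negMulLog (w m) + w m) * max (p m y - mixture w p y) 0 :=
        sum_le_sum fun m _ => sum_le_sum fun y _ =>
          mul_mul_log_div_le_max_sub (hw m) (hp m y) (mul_le_mixture hw hp m y)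
    _ = ∑ m, (negMulLog (w m) + w m) * ∑ y, max (p m y - mixture w p y) 0 := by
        simp only [mul_sum]
    _ ≤ ∑ m, (negMulLog (w m) + w m) * ε := sum_le_sum fun m _ =>
        mul_le_mul_of_nonneg_left (sum_max_sub_mixture_le hw hw1 hp1 hV m) (hcoeff m)
    _ = ε * (∑ m, negMulLog (w m) + 1) := by rw [← sum_mul, sum_add_distrib, hw1, mul_comm]

end Mixture

theorem stmt17_general {M Y : Type*} [Fintype M] [Fintype Y]
    (pM : M → ℝ) (p : M → Y → ℝ) (q : Y → ℝ) (ε T R : ℝ)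
    (hpM : ∀ m, 0 ≤ pM m) (hpM1 : ∑ m, pM m = 1)
    (hp : ∀ m y, 0 ≤ p m y) (hp1 : ∀ m, ∑ y, p m y = 1)
    (hcard : Real.log (Fintype.card M) = T * R)
    (hε : 0 < ε) (hε2 : ε ≤ 1 / 2)
    (hV : ∀ m, ∑ y, |p m y - q y| ≤ ε) :
    (∑ m, ∑ y, pM m * p m y * Real.log (p m y / (∑ m', pM m' * p m' y)))
      ≤ 2 * ε * T * R - 2 * ε * Real.log (2 * ε) := by
  change mutualInfo pM p ≤ _
  have hH := sum_negMulLog_le_log_card hpM hpM1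
  rw [mul_assoc, ← hcard]
  refine le_two_mul_mul_sub_two_mul_mul_log hε hε2
    ((mutualInfo_le_sum_negMulLog hpM hp hp1).trans hH) ?_
  exact (mutualInfo_le_mul_sum_negMulLog_add_one hpM hpM1 hp hp1 hV).trans (by gcongr)

theorem stmt17 {M Y : Type*} [Fintype M] [Fintype Y] [Nonempty M] [Nonempty Y]
    (pM : M → ℝ) (p : M → Y → ℝ) (q : Y → ℝ) (ε T R : ℝ)
    (hpM : ∀ m, 0 ≤ pM m) (hpM1 : ∑ m, pM m = 1)
    (hp : ∀ m y, 0 ≤ p m y) (hp1 : ∀ m, ∑ y, p m y = 1)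
    (hq : ∀ y, 0 ≤ q y) (hq1 : ∑ y, q y = 1)
    (hT : 0 < T) (hR : 0 ≤ R)
    (hcard : Real.log (Fintype.card M) = T * R)
    (hε : 0 < ε) (hε2 : ε ≤ 1 / 2)
    (hV : ∀ m, ∑ y, |p m y - q y| ≤ ε) :
    (∑ m, ∑ y, pM m * p m y * Real.log (p m y / (∑ m', pM m' * p m' y)))
      ≤ 2 * ε * T * R - 2 * ε * Real.log (2 * ε) :=
  stmt17_general pM p q ε T R hpM hpM1 hp hp1 hcard hε hε2 hV
end
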